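/- Let x : Fin N → ℝ and let σ be a permutation sorting x nondecreasingly. For 2 ≤ n ≤ N, x(σ(n)) = max over j ∈ {1,…,N} of (the (n−1)-th smallest term of x^{(j)}), where the maximum over all j (not just j ≤ N−n+2) still yields the n-th smallest term. -/

import Mathlib

/-!
Write `x₍ₖ₎` for the `k`-th smallest term. An order statistic is characterised by counting:
`x₍ₖ₎ ≤ v` iff at least `k` terms are `≤ v`, and deleting a term lowers such a count by at most one.
Hence every `x^{(j)}₍ₙ₋₁₎` is at most `a := x₍ₙ₎`, and deleting a minimal term
lowers every count by exactly one, so `x^{(j)}₍ₙ₋₁₎ ≥ a` for that `j`.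
-/

open Finset

lemma Fin.card_filter_univ_succAbove {N : ℕ} (p : Fin (N + 1) → Prop) [DecidablePred p]
    (j : Fin (N + 1)) :
    #{i | p i} = ite (p j) 1 0 + #{i | p (j.succAbove i)} := by
  simp only [card_filter, Fin.sum_univ_succAbove _ j]

lemma Equiv.Perm.card_filter_univ_comp {ι : Type*} [Fintype ι] (π : Equiv.Perm ι)
    (p : ι → Prop) [DecidablePred p] :
    #{i | p (π i)} = #{i | p i} := by
  simp only [card_filter, Equiv.sum_comp π fun i => ite (p i) 1 0]

lemma Monotone.le_iff_lt_card_filter {α : Type*} [LinearOrder α] {M : ℕ} {f : Fin M → α}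
    (hf : Monotone f) (k : Fin M) (v : α) :
    f k ≤ v ↔ (k : ℕ) < #{m | f m ≤ v} := by
  constructor
  · intro hk
    have hIic : Iic k ⊆ ({m | f m ≤ v} : Finset (Fin M)) := fun m hm =>
      mem_filter.2 ⟨mem_univ m, (hf (mem_Iic.1 hm)).trans hk⟩
    have := card_le_card hIic
    rw [Fin.card_Iic] at this
    omega
  · intro hcard
    by_contra! hk
    have hIio : ({m | f m ≤ v} : Finset (Fin M)) ⊆ Iio k := fun m hm =>
      mem_Iio.2 (lt_of_not_ge fun hkm => (hk.trans_le (hf hkm)).not_ge (mem_filter.1 hm).2)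
    have := card_le_card hIio
    rw [Fin.card_Iio] at this
    omega

lemma sorted_le_iff_lt_card_filter {α : Type*} [LinearOrder α] {M : ℕ} {y : Fin M → α}
    {π : Equiv.Perm (Fin M)} (h : Monotone (y ∘ π)) (k : Fin M) (v : α) :
    y (π k) ≤ v ↔ (k : ℕ) < #{i | y i ≤ v} := by
  rw [← π.card_filter_univ_comp fun i => y i ≤ v]
  exact h.le_iff_lt_card_filter k v

/-- The sequence `x` has `N + 1` terms; `σ` sorts `x`, and for each index `j`,
`τ j` sorts the sequence obtained from `x` by deleting the `j`-th term. The
`n`-th smallest term of `x` is the maximum over all `j` (not just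
`j ≤ N - n + 2`) of the `(n-1)`-th smallest term of the deleted sequence. -/
theorem nth_smallest_eq_sup_deleted (N : ℕ) (x : Fin (N + 1) → ℝ)
    (σ : Equiv.Perm (Fin (N + 1))) (hσ : Monotone (x ∘ σ))
    (n : ℕ) (hn2 : 2 ≤ n) (hnN : n ≤ N + 1)
    (τ : Fin (N + 1) → Equiv.Perm (Fin N))
    (hτ : ∀ j, Monotone ((x ∘ j.succAbove) ∘ τ j)) :
    x (σ ⟨n - 1, by omega⟩) =
      Finset.univ.sup' Finset.univ_nonempty
        (fun j : Fin (N + 1) => (x ∘ j.succAbove) (τ j ⟨n - 2, by omega⟩)) := by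
  set a := x (σ ⟨n - 1, by omega⟩)
  apply le_antisymm
  · have hmin : ∀ i, x (σ 0) ≤ x i := fun i => by simpa using hσ (Fin.zero_le (σ.symm i))
    refine le_trans ?_ (le_sup' _ (mem_univ (σ 0)))
    set j := σ 0
    set b := (x ∘ j.succAbove) (τ j ⟨n - 2, by omega⟩)
    have hb : n - 2 < #{i | x (j.succAbove i) ≤ b} :=
      (sorted_le_iff_lt_card_filter (hτ j) _ b).1 le_rfl
    have hcount := Fin.card_filter_univ_succAbove (fun i => x i ≤ b) j
    rw [if_pos (show x j ≤ b from hmin _)] at hcount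
    refine (sorted_le_iff_lt_card_filter hσ _ b).2 ?_
    dsimp only
    omega
  · have ha : n - 1 < #{i | x i ≤ a} := (sorted_le_iff_lt_card_filter hσ _ a).1 le_rfl
    refine sup'_le _ _ fun j _ => (sorted_le_iff_lt_card_filter (hτ j) _ a).2 ?_
    have hcount := Fin.card_filter_univ_succAbove (fun i => x i ≤ a) j
    split_ifs at hcount <;> simp only [Function.comp_apply] <;> omega
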